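/- Let G_r be a pendant-augmented unit disk graph on a nonempty finite set P of points in ℝ² with pendants at a subset P₀ ⊆ P. Let D ⊆ P be a set of points such that: (i) the subgraph of G_r induced by D is connected; (ii) every dummy vertex is adjacent to some vertex of D; and (iii) for every v ∈ D, either the subgraph of G_r induced by D ∖ {v} is disconnected, or some dummy vertex has no neighbor in D ∖ {v}. Then G_r has an independent set I with 4·|I| ≥ |D|. (Paper's Lemma 2: there is an independent set of G_r containing at least |D|/4 vertices, where D is the subset computed by the Proposed algorithm.) -/

import Mathlib

/-!
Root the connected graph `H = G_r[D]` at some `r ∈ D` and say that `v` dominates `x` when every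
walk from `r` to `x` passes through `v ≠ x`; dominance is a forest order on `D`. By (iii) every
vertex of `D` is either private (it alone covers some user, whose dummy vertex is then a pendant
at it) or a cut vertex of `H`, and a non-root cut vertex dominates some private vertex.

Let `S` be a maximal independent set of non-private vertices; every other non-private vertex `k`
has a neighbour `f k ∈ S`. Charge `k` to `f k` if `k` dominates `f k`. Among the remaining
vertices, forming a set `R`, charge a `k` with no element of `R` below it to a private vertex
below it, and any other `k` to `f c` for a topmost `c ∈ R` below `k`. These charges are
injective, so `|D| ≤ 3|S| + 2|C|` for the set `C` of private vertices, and `S` together with the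
dummies of `C` is an independent set of size `|S| + |C| ≥ |D| / 4`.
-/

/-- The pendant-augmented unit disk graph on a finite set `P` of points in the Euclidean
plane with pendants at `P₀ ⊆ P`: the vertex set is the disjoint union of `P` (the `Sum.inl`
vertices) and one dummy vertex `Sum.inr u` for each `u ∈ P₀`; two distinct points of `P` are
adjacent iff their Euclidean distance is at most `1`; the dummy vertex of `u ∈ P₀` is adjacent
exactly to the point `u`; dummy vertices are pairwise nonadjacent. -/
def pendantUnitDiskGraph (P P₀ : Finset (EuclideanSpace ℝ (Fin 2))) :
    SimpleGraph ({p // p ∈ P} ⊕ {p // p ∈ P₀}) where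
  Adj a b :=
    match a, b with
    | Sum.inl p, Sum.inl q =>
        p ≠ q ∧ dist (p : EuclideanSpace ℝ (Fin 2)) (q : EuclideanSpace ℝ (Fin 2)) ≤ 1
    | Sum.inl p, Sum.inr u => (p : EuclideanSpace ℝ (Fin 2)) = (u : EuclideanSpace ℝ (Fin 2))
    | Sum.inr u, Sum.inl p => (p : EuclideanSpace ℝ (Fin 2)) = (u : EuclideanSpace ℝ (Fin 2))
    | Sum.inr _, Sum.inr _ => False
  symm := by
    refine ⟨?_⟩
    rintro (p | u) (q | w) h
    · exact ⟨h.1.symm, by rw [dist_comm]; exact h.2⟩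
    · exact h
    · exact h
    · exact h
  loopless := by
    refine ⟨?_⟩
    rintro (p | u) h
    · exact h.1 rfl
    · exact h

open Finset

namespace SimpleGraph

variable {V : Type*} {H : SimpleGraph V} {r v w x y : V}

/-- The dominance relation of flow graphs, for the root `r`. -/
def Dominates (H : SimpleGraph V) (r v x : V) : Prop :=
  x ≠ v ∧ ∀ p : H.Walk r x, v ∈ p.support

lemma exists_walk_not_mem_support_of_not_dominates (h : ¬H.Dominates r v x) (hx : x ≠ v) :
    ∃ p : H.Walk r x, v ∉ p.support := by
  simpa [Dominates, hx] using h

namespace Dominates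

lemma ne_root (h : H.Dominates r v x) : x ≠ r := by
  rintro rfl
  have := h.2 .nil
  rw [Walk.support_nil, List.mem_singleton] at this
  exact h.1 this.symm

lemma of_adj (h : H.Dominates r v x) (hadj : H.Adj y x) (hy : y ≠ v) : H.Dominates r v y := by
  by_contra h'
  obtain ⟨p, hp⟩ := exists_walk_not_mem_support_of_not_dominates h' hy
  have := h.2 (p.concat hadj)
  rw [Walk.support_concat, List.mem_append, List.mem_singleton] at this
  exact this.elim hp h.1.symm

lemma asymm (hH : H.Connected) (hvw : H.Dominates r v w) : ¬H.Dominates r w v := by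
  classical
  intro hwv
  obtain ⟨p, hp⟩ := hH.exists_walk_length_eq_dist r v
  have hw := hwv.2 p
  have hv := hvw.2 (p.takeUntil w hw)
  have := ((p.takeUntil w hw).length_takeUntil_le_length hv).trans_lt
    (Walk.length_takeUntil_lt_length hw hvw.1)
  exact (H.dist_le _).not_gt (hp ▸ this)

lemma trans (hH : H.Connected) (hvw : H.Dominates r v w) (hwx : H.Dominates r w x) :
    H.Dominates r v x := by
  classical
  refine ⟨?_, fun p => ?_⟩
  · rintro rfl
    exact hvw.asymm hH hwx
  · have hw := hwx.2 p
    exact p.support_takeUntil_subset_support hw (hvw.2 (p.takeUntil w hw))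

lemma total (hH : H.Connected) (hv : H.Dominates r v x) (hw : H.Dominates r w x) (hvw : v ≠ w) :
    H.Dominates r v w ∨ H.Dominates r w v := by
  classical
  by_contra! h
  obtain ⟨a, ha⟩ := exists_walk_not_mem_support_of_not_dominates h.1 hvw.symm
  obtain ⟨b, hb⟩ := exists_walk_not_mem_support_of_not_dominates h.2 hvw
  -- A walk from `w` to `x` must pass `v` and then `w` again, so it is never a shortest one.
  obtain ⟨q, hq⟩ := hH.exists_walk_length_eq_dist w x
  have hvq : v ∈ q.support := by
    simpa [Walk.mem_support_append_iff, ha] using hv.2 (a.append q)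
  have hwq : w ∈ (q.dropUntil v hvq).support := by
    simpa [Walk.mem_support_append_iff, hb] using hw.2 (b.append (q.dropUntil v hvq))
  have := ((q.dropUntil v hvq).length_dropUntil_le_length hwq).trans_lt
    (Walk.length_dropUntil_lt_length hvq hvw)
  exact (H.dist_le _).not_gt (hq ▸ this)

lemma not_adj (hH : H.Connected) (hvw : H.Dominates r v w) (hwx : H.Dominates r w x) :
    ¬H.Adj v x :=
  fun hadj => hvw.asymm hH (hwx.of_adj hadj hvw.1.symm)

end Dominates

lemma Connected.isStrictOrder_dominates (hH : H.Connected) (r : V) :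
    IsStrictOrder V (H.Dominates r) where
  irrefl _ h := h.1 rfl
  trans _ _ _ h h' := h.trans hH h'

lemma exists_dominates_of_not_connected_induce (hvr : v ≠ r)
    (hv : ¬(H.induce {v}ᶜ).Connected) : ∃ x, H.Dominates r v x := by
  by_contra! hnone
  have reach (a : ({v}ᶜ : Set V)) : (H.induce {v}ᶜ).Reachable ⟨r, hvr.symm⟩ a := by
    obtain ⟨p, hp⟩ := exists_walk_not_mem_support_of_not_dominates (hnone a) a.2
    exact ⟨p.induce {v}ᶜ fun y hy hyv => hp (hyv ▸ hy)⟩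
  have : Nonempty ({v}ᶜ : Set V) := ⟨⟨r, hvr.symm⟩⟩
  exact hv ⟨fun a b => (reach a).symm.trans (reach b)⟩

lemma Connected.exists_dominates_mem [Finite V] (hH : H.Connected) {C : Finset V}
    (hcut : ∀ v ∉ C, ¬(H.induce {v}ᶜ).Connected) (hvC : v ∉ C) (hvr : v ≠ r) :
    ∃ c ∈ C, H.Dominates r v c := by
  have := hH.isStrictOrder_dominates r
  obtain ⟨x, hx⟩ := exists_dominates_of_not_connected_induce hvr (hcut v hvC)
  obtain ⟨c, hvc, hmin⟩ :=
    (Finite.wellFounded_of_trans_of_irrefl (Function.swap (H.Dominates r))).has_min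
      {c | H.Dominates r v c} ⟨x, hx⟩
  refine ⟨c, ?_, hvc⟩
  by_contra hc
  obtain ⟨y, hy⟩ := exists_dominates_of_not_connected_induce hvc.ne_root (hcut c hc)
  exact hmin y (hvc.trans hH hy) hy

lemma card_le_card_of_dominates_adj (hH : H.Connected) {T S : Finset V} (f : V → V)
    (hf : ∀ k ∈ T, f k ∈ S ∧ H.Adj k (f k) ∧ H.Dominates r k (f k)) : #T ≤ #S := by
  refine card_le_card_of_injOn f (fun k hk => (hf k hk).1) fun k₁ hk₁ k₂ hk₂ heq => ?_
  by_contra hne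
  obtain ⟨-, hadj₁, hdom₁⟩ := hf k₁ hk₁
  obtain ⟨-, hadj₂, hdom₂⟩ := hf k₂ hk₂
  rw [← heq] at hadj₂ hdom₂
  rcases hdom₁.total hH hdom₂ hne with h | h
  · exact h.not_adj hH hdom₂ hadj₁
  · exact h.not_adj hH hdom₁ hadj₂

lemma card_le_card_of_forall_not_dominates (hH : H.Connected) {T C : Finset V}
    (hT : ∀ k ∈ T, ∀ k' ∈ T, ¬H.Dominates r k k') (hC : ∀ k ∈ T, ∃ c ∈ C, H.Dominates r k c) :
    #T ≤ #C := by
  choose! g hgC hg using hC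
  refine card_le_card_of_injOn g hgC fun k₁ hk₁ k₂ hk₂ heq => ?_
  by_contra hne
  have h₂ := hg k₂ hk₂
  rw [← heq] at h₂
  rcases (hg k₁ hk₁).total hH h₂ hne with h | h
  · exact hT k₁ hk₁ k₂ hk₂ h
  · exact hT k₂ hk₂ k₁ hk₁ h

lemma card_le_card_of_dominates_not_dominates_adj [Finite V] (hH : H.Connected)
    {T R S : Finset V} (hTR : T ⊆ R) (hT : ∀ k ∈ T, ∃ k' ∈ R, H.Dominates r k k')
    (hRS : Disjoint R S) (f : V → V)
    (hf : ∀ k ∈ R, f k ∈ S ∧ H.Adj k (f k) ∧ ¬H.Dominates r k (f k)) : #T ≤ #S := by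
  have := hH.isStrictOrder_dominates r
  have htop (k) (hk : k ∈ T) : ∃ c ∈ R, H.Dominates r k c ∧
      ∀ x ∈ R, H.Dominates r k x → ¬H.Dominates r x c := by
    obtain ⟨c, ⟨hcR, hkc⟩, hc⟩ := (Finite.wellFounded_of_trans_of_irrefl (H.Dominates r)).has_min
      {c | c ∈ R ∧ H.Dominates r k c} (hT k hk)
    exact ⟨c, hcR, hkc, fun x hxR hkx => hc x ⟨hxR, hkx⟩⟩
  choose! c hcR hkc hctop using htop
  have hdom (k) (hk : k ∈ T) : H.Dominates r k (f (c k)) :=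
    (hkc k hk).of_adj (hf _ (hcR k hk)).2.1.symm fun h =>
      Finset.disjoint_left.1 hRS (hTR hk) (h ▸ (hf _ (hcR k hk)).1)
  -- `c k₁` is adjacent to `f (c k₁)`, which lies below `k₂`; so `c k₁` is `k₂` or lies below
  -- `k₂`, and both contradict the choice of `c k₁`.
  have key (k₁) (hk₁ : k₁ ∈ T) (k₂) (hk₂ : k₂ ∈ T) (h : H.Dominates r k₁ k₂)
      (heq : f (c k₁) = f (c k₂)) : False := by
    have h₂ : H.Dominates r k₂ (f (c k₁)) := heq ▸ hdom k₂ hk₂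
    by_cases hck : c k₁ = k₂
    · exact (hf k₂ (hTR hk₂)).2.2 (hck ▸ h₂)
    · exact hctop k₁ hk₁ k₂ (hTR hk₂) h (h₂.of_adj (hf _ (hcR k₁ hk₁)).2.1 hck)
  refine card_le_card_of_injOn (fun k => f (c k)) (fun k hk => (hf _ (hcR k hk)).1)
    fun k₁ hk₁ k₂ hk₂ (heq : f (c k₁) = f (c k₂)) => ?_
  by_contra hne
  rcases (hdom k₁ hk₁).total hH (heq ▸ hdom k₂ hk₂) hne with h | h
  · exact key k₁ hk₁ k₂ hk₂ h heq
  · exact key k₂ hk₂ k₁ hk₁ h heq.symm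

lemma card_le_card_add_card_of_not_dominates_adj [Finite V] (hH : H.Connected)
    {R S C : Finset V} (hRS : Disjoint R S) (hC : ∀ k ∈ R, ∃ c ∈ C, H.Dominates r k c)
    (f : V → V) (hf : ∀ k ∈ R, f k ∈ S ∧ H.Adj k (f k) ∧ ¬H.Dominates r k (f k)) :
    #R ≤ #S + #C := by
  classical
  rw [← card_filter_add_card_filter_not (s := R) fun k => ∃ k' ∈ R, H.Dominates r k k']
  refine add_le_add (card_le_card_of_dominates_not_dominates_adj hH (filter_subset _ _)
    (fun k hk => (mem_filter.1 hk).2) hRS f hf) ?_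
  refine card_le_card_of_forall_not_dominates hH (fun k hk k' hk' hkk' => ?_)
    fun k hk => hC k (mem_filter.1 hk).1
  exact (mem_filter.1 hk).2 ⟨k', (mem_filter.1 hk').1, hkk'⟩

lemma exists_isIndepSet_subset_forall_exists_adj [DecidableEq V] (H : SimpleGraph V)
    (K : Finset V) : ∃ S ⊆ K, H.IsIndepSet S ∧ ∀ k ∈ K \ S, ∃ s ∈ S, H.Adj k s := by
  classical
  obtain ⟨S, hS⟩ := (K.powerset.filter fun S : Finset V => H.IsIndepSet S).exists_maximal
    ⟨∅, by simp⟩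
  simp only [mem_filter, mem_powerset] at hS
  refine ⟨S, hS.1.1, hS.1.2, fun k hk => ?_⟩
  by_contra! hno
  rw [mem_sdiff] at hk
  have hins : insert k S ⊆ K ∧ H.IsIndepSet (insert k S : Finset V) := by
    refine ⟨insert_subset hk.1 hS.1.1, ?_⟩
    rw [coe_insert]
    exact hS.1.2.insert fun s hs _ => ⟨hno s hs, fun h => hno s hs h.symm⟩
  exact hk.2 (hS.2 hins (subset_insert k S) (mem_insert_self k S))

theorem Connected.exists_isIndepSet_card_le [Fintype V] (hH : H.Connected)
    (C : Finset V) (hcut : ∀ v ∉ C, ¬(H.induce {v}ᶜ).Connected) :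
    ∃ S : Finset V, H.IsIndepSet S ∧ Disjoint S C ∧ Fintype.card V ≤ 3 * #S + 2 * #C := by
  classical
  obtain ⟨r⟩ := hH.nonempty
  obtain ⟨S, hSK, hS, hSdom⟩ := H.exists_isIndepSet_subset_forall_exists_adj Cᶜ
  choose! f hfS hfadj using hSdom
  have hKS : Disjoint (Cᶜ \ S) S := sdiff_disjoint
  have hA : #{k ∈ Cᶜ \ S | H.Dominates r k (f k)} ≤ #S :=
    card_le_card_of_dominates_adj hH f fun k hk =>
      ⟨hfS k (mem_filter.1 hk).1, hfadj k (mem_filter.1 hk).1, (mem_filter.1 hk).2⟩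
  have hR : #{k ∈ Cᶜ \ S | ¬H.Dominates r k (f k)} ≤ #S + #C := by
    refine card_le_card_add_card_of_not_dominates_adj hH (hKS.mono_left (filter_subset _ _)) ?_ f
      fun k hk => ⟨hfS k (mem_filter.1 hk).1, hfadj k (mem_filter.1 hk).1, (mem_filter.1 hk).2⟩
    intro k hk
    obtain ⟨hkK, hkf⟩ := mem_filter.1 hk
    -- `k ≠ r`, since the root dominates every other vertex, in particular `f r ∈ S`.
    refine hH.exists_dominates_mem hcut (mem_compl.1 (mem_sdiff.1 hkK).1) fun hkr => hkf ?_
    subst hkr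
    exact ⟨fun h => (mem_sdiff.1 hkK).2 (h ▸ hfS k hkK), fun p => p.start_mem_support⟩
  have hsplit := card_filter_add_card_filter_not (s := Cᶜ \ S) fun k => H.Dominates r k (f k)
  have hK := card_sdiff_add_card_eq_card hSK
  rw [card_compl] at hK
  refine ⟨S, hS, Finset.subset_compl_iff_disjoint_right.1 hSK, ?_⟩
  omega

variable {W : Type*}

def induceComplSingletonIso (G : SimpleGraph W) (s : Set W) (x : s) :
    (G.induce s).induce {x}ᶜ ≃g G.induce (s \ {x.1}) where
  toFun y := ⟨y.1.1, y.1.2, fun h => y.2 (Subtype.ext h)⟩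
  invFun z := ⟨⟨z.1, z.2.1⟩, fun h => z.2.2 (congrArg Subtype.val h)⟩
  left_inv _ := rfl
  right_inv _ := rfl
  map_rel_iff' := Iff.rfl

lemma not_connected_induce_compl_inl {α β : Type*} {G : SimpleGraph (α ⊕ β)} {D : Set α} {v : α}
    (hv : v ∈ D) (h : ¬(G.induce (Sum.inl '' (D \ {v}))).Connected) :
    ¬((G.induce (Sum.inl '' D)).induce {⟨.inl v, v, hv, rfl⟩}ᶜ).Connected := by
  rw [Set.image_sdiff Sum.inl_injective, Set.image_singleton] at h
  rwa [(G.induceComplSingletonIso _ _).connected_iff]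

lemma IsIndepSet.exists_card_eq_add_of_pendants {G : SimpleGraph W} {s U : Set W}
    {S C : Finset s} (hS : (G.induce s).IsIndepSet S) (hSC : Disjoint S C) (hU : G.IsIndepSet U)
    (hUs : Disjoint U s) (f : s → W) (hfU : ∀ c ∈ C, f c ∈ U) (hfadj : ∀ c ∈ C, G.Adj (f c) c)
    (hfpriv : ∀ c ∈ C, ∀ y : s, G.Adj (f c) y → y = c) :
    ∃ I : Finset W, G.IsIndepSet I ∧ #I = #S + #C := by
  classical
  have hinj : Set.InjOn f C := fun c hc c' hc' heq => hfpriv c' hc' c (heq ▸ hfadj c hc)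
  have hdisj : Disjoint (S.map (Function.Embedding.subtype _)) (C.image f) := by
    simp only [Finset.disjoint_left, mem_map, mem_image, Function.Embedding.coe_subtype]
    rintro _ ⟨y, -, rfl⟩ ⟨c, hc, hcy⟩
    exact Set.disjoint_left.1 hUs (hcy ▸ hfU c hc) y.2
  refine ⟨S.map (Function.Embedding.subtype _) ∪ C.image f, ?_, by
    rw [card_union_of_disjoint hdisj, card_map, card_image_of_injOn hinj]⟩
  have : Std.Symm fun v w => ¬G.Adj v w := ⟨fun _ _ h hadj => h hadj.symm⟩
  rw [coe_union, coe_map, coe_image, IsIndepSet, Set.pairwise_union_of_symm]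
  refine ⟨?_, hU.mono (Set.image_subset_iff.2 hfU), ?_⟩
  · rintro _ ⟨y, hy, rfl⟩ _ ⟨y', hy', rfl⟩ hne
    exact hS hy hy' fun h => hne (congrArg _ h)
  · rintro _ ⟨y, hy, rfl⟩ _ ⟨c, hc, rfl⟩ - hadj
    exact Finset.disjoint_left.1 hSC hy (hfpriv c hc y hadj.symm ▸ hc)

end SimpleGraph

open SimpleGraph

lemma pendantUnitDiskGraph_isIndepSet_range_inr (P P₀ : Finset (EuclideanSpace ℝ (Fin 2))) :
    (pendantUnitDiskGraph P P₀).IsIndepSet (Set.range Sum.inr) := by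
  rintro _ ⟨u, rfl⟩ _ ⟨u', rfl⟩ -
  exact id

theorem exists_indep_ge_quarter_general (P P₀ : Finset (EuclideanSpace ℝ (Fin 2)))
    (D : Finset {p // p ∈ P})
    (hconn : ((pendantUnitDiskGraph P P₀).induce
      (Sum.inl '' (↑D : Set {p // p ∈ P}))).Connected)
    (hcov : ∀ u : {p // p ∈ P₀}, ∃ d ∈ D,
      (pendantUnitDiskGraph P P₀).Adj (Sum.inr u) (Sum.inl d))
    (hfixed : ∀ v ∈ D,
      ¬ ((pendantUnitDiskGraph P P₀).induce
          (Sum.inl '' ((↑D : Set {p // p ∈ P}) \ {v}))).Connected ∨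
      ∃ u : {p // p ∈ P₀}, ∀ d ∈ D, d ≠ v →
        ¬ (pendantUnitDiskGraph P P₀).Adj (Sum.inr u) (Sum.inl d)) :
    ∃ I : Finset ({p // p ∈ P} ⊕ {p // p ∈ P₀}),
      (∀ a ∈ I, ∀ b ∈ I, ¬ (pendantUnitDiskGraph P P₀).Adj a b) ∧ 4 * I.card ≥ D.card := by
  classical
  set G := pendantUnitDiskGraph P P₀
  set s : Set ({p // p ∈ P} ⊕ {p // p ∈ P₀}) := Sum.inl '' ↑D
  let C : Finset s := {x | ∃ u, ∀ y : s, G.Adj (.inr u) y → y = x}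
  have hcut : ∀ x ∉ C, ¬((G.induce s).induce {x}ᶜ).Connected := by
    rintro ⟨_, v, hv, rfl⟩ hx
    refine not_connected_induce_compl_inl hv ((hfixed v hv).resolve_right fun ⟨u, hu⟩ => hx ?_)
    refine mem_filter.2 ⟨mem_univ _, u, fun ⟨_, d, hd, hdy⟩ hadj => ?_⟩
    subst hdy
    by_contra hne
    exact hu d hd (fun h => hne (by subst h; rfl)) hadj
  have hpend (x) (hx : x ∈ C) :
      ∃ w ∈ Set.range Sum.inr, G.Adj w x ∧ ∀ y : s, G.Adj w y → y = x := by
    obtain ⟨u, hu⟩ := (mem_filter.1 hx).2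
    obtain ⟨d, hd, hadj⟩ := hcov u
    exact ⟨.inr u, ⟨u, rfl⟩, hu ⟨_, d, hd, rfl⟩ hadj ▸ hadj, hu⟩
  have : Nonempty ({p // p ∈ P} ⊕ {p // p ∈ P₀}) := hconn.nonempty.map Subtype.val
  choose! f hfU hfadj hfpriv using hpend
  obtain ⟨S, hS, hSC, hcard⟩ := hconn.exists_isIndepSet_card_le C hcut
  obtain ⟨I, hI, hIcard⟩ := hS.exists_card_eq_add_of_pendants hSC
    (pendantUnitDiskGraph_isIndepSet_range_inr P P₀)
    (Set.isCompl_range_inl_range_inr.disjoint.symm.mono_right (Set.image_subset_range _ _))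
    f hfU hfadj hfpriv
  have hs : Fintype.card s = #D :=
    (Set.card_image_of_injective _ Sum.inl_injective).trans (Fintype.card_coe D)
  exact ⟨I, fun a ha b hb hab => hI ha hb hab.ne hab, by omega⟩

/-- Paper's Lemma 2: Let `D ⊆ P` be such that (i) the subgraph of the
pendant-augmented unit disk graph `G_r` induced by `D` is connected, (ii) every dummy vertex
is adjacent to some vertex of `D`, and (iii) every `v ∈ D` is "fixed": removing `v` from `D`
either disconnects the induced subgraph or leaves some dummy vertex with no neighbor in
`D \ {v}`. Then `G_r` has an independent set `I` with `4|I| ≥ |D|`. -/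
theorem exists_indep_ge_quarter (P P₀ : Finset (EuclideanSpace ℝ (Fin 2)))
    (hP : P.Nonempty) (hP₀ : P₀ ⊆ P)
    (D : Finset {p // p ∈ P})
    (hconn : ((pendantUnitDiskGraph P P₀).induce
      (Sum.inl '' (↑D : Set {p // p ∈ P}))).Connected)
    (hcov : ∀ u : {p // p ∈ P₀}, ∃ d ∈ D,
      (pendantUnitDiskGraph P P₀).Adj (Sum.inr u) (Sum.inl d))
    (hfixed : ∀ v ∈ D,
      ¬ ((pendantUnitDiskGraph P P₀).induce
          (Sum.inl '' ((↑D : Set {p // p ∈ P}) \ {v}))).Connected ∨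
      ∃ u : {p // p ∈ P₀}, ∀ d ∈ D, d ≠ v →
        ¬ (pendantUnitDiskGraph P P₀).Adj (Sum.inr u) (Sum.inl d)) :
    ∃ I : Finset ({p // p ∈ P} ⊕ {p // p ∈ P₀}),
      (∀ a ∈ I, ∀ b ∈ I, ¬ (pendantUnitDiskGraph P P₀).Adj a b) ∧ 4 * I.card ≥ D.card :=
  exists_indep_ge_quarter_general P P₀ D hconn hcov hfixed
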